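/- arXiv:2202.00875 — 4 statements merged into one kernel-verified Lean document; each statement's English description precedes it below -/
import Mathlib

section
/- For any function φ : ℝ → ℝ such that φ'(r)/r is decreasing on (0, ∞) and φ is differentiable, for every r > 0 the identity φ(r) = inf over α > 0 of [ (φ'(α)/(2α)) · r² + φ(α) − α·φ'(α)/2 ] holds, and the infimum is attained at α = r. -/
/-!
Fix `α > 0` and put `c = φ'(α)/α`. The function `t ↦ φ t - c t²/2` has derivative
`t (φ'(t)/t - c)`, which is nonnegative for `t < α` and nonpositive for `t > α` because
`φ'(t)/t` is decreasing; so it is maximal at `α`, and this maximality is exactly the inequality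
`φ r ≤ c r²/2 + φ α - c α²/2`, with equality at `α = r`.
-/

open Set

/-- The MM surrogate of `φ` anchored at `α`, evaluated at `r`. -/
noncomputable def quadraticMajorizer (φ : ℝ → ℝ) (α r : ℝ) : ℝ :=
  deriv φ α / (2 * α) * r ^ 2 + (φ α - α * deriv φ α / 2)

theorem quadraticMajorizer_self (φ : ℝ → ℝ) (r : ℝ) :
    quadraticMajorizer φ r r = φ r := by
  unfold quadraticMajorizer
  field_simp
  ring

theorem isMaxOn_sub_mul_sq_of_antitoneOn_deriv_div {φ : ℝ → ℝ}
    (hφ : DifferentiableOn ℝ φ (Ioi 0)) (hanti : AntitoneOn (fun t => deriv φ t / t) (Ioi 0))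
    {α : ℝ} (hα : 0 < α) :
    IsMaxOn (fun t => φ t - deriv φ α / α * t ^ 2 / 2) (Ioi 0) α := by
  set c := deriv φ α / α
  have hderiv : ∀ t > 0, HasDerivAt (fun t => φ t - c * t ^ 2 / 2) (t * (deriv φ t / t - c)) t := by
    intro t ht
    have hq : HasDerivAt (fun t : ℝ => c * t ^ 2 / 2) (c * t) t := by
      refine (((hasDerivAt_pow 2 t).const_mul c).div_const 2).congr_deriv ?_
      norm_num
      ring
    refine ((hφ.differentiableAt (Ioi_mem_nhds ht)).hasDerivAt.sub hq).congr_deriv ?_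
    rw [mul_sub, mul_div_cancel₀ _ ht.ne', mul_comm t c]
  have hdiff : DifferentiableOn ℝ (fun t => φ t - c * t ^ 2 / 2) (Ioi 0) :=
    fun t ht => (hderiv t ht).differentiableAt.differentiableWithinAt
  refine isMaxOn_Ioi_of_deriv (hderiv α hα).continuousAt
    (hdiff.mono Ioo_subset_Ioi_self) (hdiff.mono (Ioi_subset_Ioi hα.le)) ?_ ?_
  · intro t ⟨ht, htα⟩
    rw [(hderiv t ht).deriv]
    exact mul_nonneg ht.le (sub_nonneg.2 (hanti ht hα htα.le))
  · intro t (hαt : α < t)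
    have ht : 0 < t := hα.trans hαt
    rw [(hderiv t ht).deriv]
    exact mul_nonpos_of_nonneg_of_nonpos ht.le (sub_nonpos.2 (hanti hα ht hαt.le))

theorem le_quadraticMajorizer {φ : ℝ → ℝ}
    (hφ : DifferentiableOn ℝ φ (Ioi 0)) (hanti : AntitoneOn (fun t => deriv φ t / t) (Ioi 0))
    {α r : ℝ} (hα : 0 < α) (hr : 0 < r) :
    φ r ≤ quadraticMajorizer φ α r := by
  have hmax := isMaxOn_sub_mul_sq_of_antitoneOn_deriv_div hφ hanti hα (mem_Ioi.2 hr)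
  have hexpand : quadraticMajorizer φ α r
      = φ α - deriv φ α / α * α ^ 2 / 2 + deriv φ α / α * r ^ 2 / 2 := by
    unfold quadraticMajorizer
    field_simp
    ring
  rw [hexpand]
  linarith [hmax.out]

/-- Super-Gaussian majorization identity: if `φ` is differentiable on `(0,∞)` and
`r ↦ φ'(r)/r` is decreasing there, then for every `r > 0`,
`φ r` is the minimum over `α > 0` of `φ'(α)/(2α) · r² + (φ α − α φ'(α)/2)`,
attained at `α = r`. -/
theorem stmt0 (φ : ℝ → ℝ)
    (hdiff : ∀ r : ℝ, 0 < r → DifferentiableAt ℝ φ r)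
    (hdec : ∀ a b : ℝ, 0 < a → a ≤ b → deriv φ b / b ≤ deriv φ a / a)
    (r : ℝ) (hr : 0 < r) :
    IsLeast {y : ℝ | ∃ α : ℝ, 0 < α ∧
        y = deriv φ α / (2 * α) * r ^ 2 + (φ α - α * deriv φ α / 2)} (φ r) ∧
      deriv φ r / (2 * r) * r ^ 2 + (φ r - r * deriv φ r / 2) = φ r := by
  have hφ : DifferentiableOn ℝ φ (Ioi 0) := fun t ht => (hdiff t ht).differentiableWithinAt
  have hanti : AntitoneOn (fun t => deriv φ t / t) (Ioi 0) :=
    fun a ha _ _ hab => hdec a _ ha hab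
  have hself := quadraticMajorizer_self φ r
  refine ⟨⟨⟨r, hr, hself.symm⟩, ?_⟩, hself⟩
  rintro _ ⟨α, hα, rfl⟩
  exact le_quadraticMajorizer hφ hanti hα hr
end

section
/- Let W, A ∈ GL(m, ℂ) with W A = I. For fixed last m−d columns of A, the set of pairs (W', A') with W' A' = I and A' agreeing with A in its last m−d columns equals the set { (T W, A T⁻¹) : T ∈ 𝒟 }, where 𝒟 is the group of block matrices [[P, 0],[Q, I_{m−d}]] with P invertible. -/
open Matrix

/-- Right-multiplying by a block matrix `[[X,0],[Y,1]]` does not change the `inr` columns. -/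
lemma aux_col {α : Type*} {β : Type*} [Fintype α] [Fintype β] [DecidableEq α] [DecidableEq β]
    (B : Matrix (α ⊕ β) (α ⊕ β) ℂ) (X : Matrix α α ℂ) (Y : Matrix β α ℂ)
    (i : α ⊕ β) (j : β) :
    (B * (Matrix.fromBlocks X 0 Y (1 : Matrix β β ℂ))) i (Sum.inr j) = B i (Sum.inr j) := by
  simp [Matrix.mul_apply, Matrix.fromBlocks, Fintype.sum_sum_type, Matrix.one_apply,
    mul_ite, mul_zero, mul_one]

/-- Inverse of a lower block triangular matrix. -/
lemma aux_mul {α : Type*} {β : Type*} [Fintype α] [Fintype β] [DecidableEq α] [DecidableEq β]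
    (P : Matrix α α ℂ) (Q : Matrix β α ℂ) (hP : IsUnit P) :
    Matrix.fromBlocks P (0 : Matrix α β ℂ) Q (1 : Matrix β β ℂ) *
      Matrix.fromBlocks P⁻¹ (0 : Matrix α β ℂ) (-(Q * P⁻¹)) (1 : Matrix β β ℂ) = 1 := by
  have hPdet : IsUnit P.det := (Matrix.isUnit_iff_isUnit_det P).mp hP
  rw [Matrix.fromBlocks_multiply]
  have h1 : P * P⁻¹ = 1 := Matrix.mul_nonsing_inv P hPdet
  simp [h1, ← Matrix.fromBlocks_one, Matrix.mul_assoc]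

/-- Multiplicative-update reformulation of ISS_d: given `W A = I`, the pairs `(W', A')`
with `W' A' = I` and `A'` agreeing with `A` in its last `m − d` columns are exactly the
pairs `(T W, A T⁻¹)` with `T = [[P,0],[Q,I]]`, `P` invertible. -/
theorem stmt5 (m d : ℕ) (hd : 1 ≤ d) (hdm : d ≤ m)
    (W A : Matrix (Fin d ⊕ Fin (m - d)) (Fin d ⊕ Fin (m - d)) ℂ)
    (hWA : W * A = 1) :
    {p : Matrix (Fin d ⊕ Fin (m - d)) (Fin d ⊕ Fin (m - d)) ℂ ×
         Matrix (Fin d ⊕ Fin (m - d)) (Fin d ⊕ Fin (m - d)) ℂ |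
        p.1 * p.2 = 1 ∧ ∀ i j, p.2 i (Sum.inr j) = A i (Sum.inr j)} =
      {p | ∃ (P : Matrix (Fin d) (Fin d) ℂ) (Q : Matrix (Fin (m - d)) (Fin d) ℂ),
        IsUnit P ∧ p.1 = Matrix.fromBlocks P 0 Q 1 * W ∧
          p.2 = A * (Matrix.fromBlocks P 0 Q 1)⁻¹} := by
  have hAW : A * W = 1 := mul_eq_one_comm.mp hWA
  ext p
  obtain ⟨W', A'⟩ := p
  simp only [Set.mem_setOf_eq]
  constructor
  · rintro ⟨h1, h2⟩
    have hA'W' : A' * W' = 1 := mul_eq_one_comm.mp h1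
    set S : Matrix (Fin d ⊕ Fin (m - d)) (Fin d ⊕ Fin (m - d)) ℂ := W * A' with hSdef
    have hScol : ∀ i j, S i (Sum.inr j) = (1 : Matrix (Fin d ⊕ Fin (m - d)) (Fin d ⊕ Fin (m - d)) ℂ) i (Sum.inr j) := by
      intro i j
      rw [← hWA]
      simp only [hSdef, Matrix.mul_apply, h2]
    set P₀ := S.toBlocks₁₁ with hP₀
    set Q₀ := S.toBlocks₂₁ with hQ₀
    have hSblock : S = Matrix.fromBlocks P₀ 0 Q₀ 1 := by
      ext i j
      rcases i with i | i <;> rcases j with j | j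
      · simp [Matrix.fromBlocks, hP₀, Matrix.toBlocks₁₁]
      · simpa [Matrix.fromBlocks, Matrix.one_apply] using hScol (Sum.inl i) j
      · simp [Matrix.fromBlocks, hQ₀, Matrix.toBlocks₂₁]
      · simpa [Matrix.fromBlocks, Matrix.one_apply] using hScol (Sum.inr i) j
    have hSright : S * (W' * A) = 1 := by
      calc S * (W' * A) = W * (A' * W') * A := by
            simp only [hSdef, Matrix.mul_assoc]
        _ = 1 := by rw [hA'W']; simp [hWA]
    have hSdet : IsUnit S.det := Matrix.isUnit_det_of_right_inverse hSright
    have hP₀det : IsUnit P₀.det := by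
      rw [hSblock, Matrix.det_fromBlocks_zero₁₂] at hSdet
      simpa using hSdet
    have hP₀unit : IsUnit P₀ := (Matrix.isUnit_iff_isUnit_det P₀).mpr hP₀det
    have hP₀invUnit : IsUnit P₀⁻¹ :=
      ⟨⟨P₀⁻¹, P₀, Matrix.nonsing_inv_mul P₀ hP₀det, Matrix.mul_nonsing_inv P₀ hP₀det⟩, rfl⟩
    set T : Matrix (Fin d ⊕ Fin (m - d)) (Fin d ⊕ Fin (m - d)) ℂ :=
      Matrix.fromBlocks P₀⁻¹ 0 (-(Q₀ * P₀⁻¹)) 1 with hTdef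
    have hST : S * T = 1 := by rw [hSblock, hTdef]; exact aux_mul P₀ Q₀ hP₀unit
    have hTdet : IsUnit T.det := Matrix.isUnit_det_of_left_inverse hST
    have hTinv : T⁻¹ = S := Matrix.inv_eq_left_inv hST
    have hTS : T * S = 1 := by
      rw [← hTinv]; exact Matrix.mul_nonsing_inv T hTdet
    have hTW : T * W = W' := by
      have h3 : (T * W) * A' = 1 := by
        rw [Matrix.mul_assoc, ← hSdef, hTS]
      calc T * W = (T * W) * (A' * W') := by rw [hA'W', Matrix.mul_one]
        _ = ((T * W) * A') * W' := by noncomm_ring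
        _ = W' := by rw [h3, Matrix.one_mul]
    have hAT : A * T⁻¹ = A' := by
      rw [hTinv, hSdef, ← Matrix.mul_assoc, hAW, Matrix.one_mul]
    exact ⟨P₀⁻¹, -(Q₀ * P₀⁻¹), hP₀invUnit, hTW.symm, hAT.symm⟩
  · rintro ⟨P, Q, hP, h1, h2⟩
    have hPdet : IsUnit P.det := (Matrix.isUnit_iff_isUnit_det P).mp hP
    have hTinv : (Matrix.fromBlocks P 0 Q 1)⁻¹ =
        Matrix.fromBlocks P⁻¹ 0 (-(Q * P⁻¹)) 1 :=
      Matrix.inv_eq_right_inv (aux_mul P Q hP)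
    constructor
    · rw [h1, h2, hTinv]
      calc Matrix.fromBlocks P 0 Q 1 * W * (A * Matrix.fromBlocks P⁻¹ 0 (-(Q * P⁻¹)) 1)
          = Matrix.fromBlocks P 0 Q 1 * (W * A) * Matrix.fromBlocks P⁻¹ 0 (-(Q * P⁻¹)) 1 := by
            simp only [Matrix.mul_assoc]
        _ = 1 := by rw [hWA]; simpa using aux_mul P Q hP
    · intro i j
      rw [h2, hTinv]
      exact aux_col A P⁻¹ (-(Q * P⁻¹)) i j
end

section
/- Let G₁, G₂ ∈ ℂ^{2×2} be Hermitian positive definite. The function f(P) = p₁* G₁ p₁ + p₂* G₂ p₂ − log |det P|², where P = [p₁, p₂]* ∈ GL(2, ℂ), is bounded below, and its infimum over GL(2, ℂ) is attained. -/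
/-!
With sup norms on the rows, the quadratic part dominates `c (‖p₁‖² + ‖p₂‖²)` for some `c > 0`,
while the Hadamard-type bound `|det P| ≤ 2 ‖p₁‖ ‖p₂‖ ≤ ‖p₁‖² + ‖p₂‖²` caps the logarithmic part by `2 log (‖p₁‖² + ‖p₂‖²)`.
Hence `f` grows linearly in `‖p₁‖² + ‖p₂‖²`, and since the quadratic part is nonnegative, `f ≤ M`
also forces `|det P|² ≥ exp (-M)`. So each sublevel set of `f` on `GL(2, ℂ)` lies in a compact
subset of `GL(2, ℂ)` on which `f` is continuous, and `f` attains its minimum there.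
-/

open Matrix
open scoped ComplexOrder

theorem exists_isMinOn_of_sublevel_subset_isCompact {X α : Type*} [TopologicalSpace X]
    [LinearOrder α] [TopologicalSpace α] [ClosedIicTopology α] {f : X → α} {s K : Set X}
    {x₀ : X} (hx₀ : x₀ ∈ s) (hK : IsCompact K) (hKs : K ⊆ s) (hf : ContinuousOn f K)
    (hsub : ∀ x ∈ s, f x ≤ f x₀ → x ∈ K) : ∃ x ∈ s, IsMinOn f s x := by
  obtain ⟨x, hxK, hmin⟩ := hK.exists_isMinOn ⟨x₀, hsub x₀ hx₀ le_rfl⟩ hf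
  refine ⟨x, hKs hxK, fun y hy => ?_⟩
  rcases le_total (f y) (f x₀) with hle | hle
  · exact hmin (hsub y hy hle)
  · exact (hmin (hsub x₀ hx₀ le_rfl)).trans hle

theorem Matrix.PosDef.exists_pos_mul_sq_norm_le {𝕜 n : Type*} [RCLike 𝕜] [Fintype n]
    {G : Matrix n n 𝕜} (hG : G.PosDef) :
    ∃ c > 0, ∀ x : n → 𝕜, c * ‖x‖ ^ 2 ≤ RCLike.re (star x ⬝ᵥ G *ᵥ x) := by
  set q : (n → 𝕜) → ℝ := fun x => RCLike.re (star x ⬝ᵥ G *ᵥ x)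
  have hq_smul (r : ℝ) (x : n → 𝕜) : q (r • x) = r ^ 2 * q x := by
    simp only [q, star_smul, mulVec_smul, smul_dotProduct, dotProduct_smul, RCLike.smul_re,
      star_trivial]
    ring
  rcases subsingleton_or_nontrivial (n → 𝕜) with _ | _
  · exact ⟨1, one_pos, fun x => by simp [Subsingleton.elim x 0]⟩
  obtain ⟨u, hu, hmin⟩ := (isCompact_sphere (0 : n → 𝕜) 1).exists_isMinOn
    (NormedSpace.sphere_nonempty.2 zero_le_one) (by fun_prop : Continuous q).continuousOn
  refine ⟨q u, hG.re_dotProduct_pos (ne_zero_of_mem_unit_sphere ⟨u, hu⟩), fun x => ?_⟩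
  rcases eq_or_ne x 0 with rfl | hx
  · simp
  have hx' : 0 < ‖x‖ := norm_pos_iff.2 hx
  have hu_le : q u ≤ ‖x‖⁻¹ ^ 2 * q x := by
    rw [← hq_smul]
    exact hmin (by simp [norm_smul, hx'.ne'])
  calc q u * ‖x‖ ^ 2 ≤ ‖x‖⁻¹ ^ 2 * q x * ‖x‖ ^ 2 := by gcongr
    _ = q x := by field_simp

theorem Matrix.norm_det_fin_two_le {R : Type*} [SeminormedCommRing R]
    (P : Matrix (Fin 2) (Fin 2) R) : ‖P.det‖ ≤ 2 * ‖P 0‖ * ‖P 1‖ := by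
  have h (i j : Fin 2) : ‖P 0 i * P 1 j‖ ≤ ‖P 0‖ * ‖P 1‖ :=
    (norm_mul_le _ _).trans (mul_le_mul (norm_le_pi_norm _ i) (norm_le_pi_norm _ j)
      (norm_nonneg _) (norm_nonneg _))
  rw [det_fin_two]
  linarith [norm_sub_le (P 0 0 * P 1 1) (P 0 1 * P 1 0), h 0 1, h 1 0]

namespace LogDetObjective

variable {G₁ G₂ : Matrix (Fin 2) (Fin 2) ℂ}

noncomputable def quadPart (G₁ G₂ P : Matrix (Fin 2) (Fin 2) ℂ) : ℝ :=
  (P 0 ⬝ᵥ G₁ *ᵥ star (P 0)).re + (P 1 ⬝ᵥ G₂ *ᵥ star (P 1)).re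

noncomputable def objective (G₁ G₂ P : Matrix (Fin 2) (Fin 2) ℂ) : ℝ :=
  quadPart G₁ G₂ P - Real.log (‖P.det‖ ^ 2)

theorem exists_pos_mul_le_quadPart (h₁ : G₁.PosDef) (h₂ : G₂.PosDef) :
    ∃ c > 0, ∀ P, c * (‖P 0‖ ^ 2 + ‖P 1‖ ^ 2) ≤ quadPart G₁ G₂ P := by
  obtain ⟨c₁, hc₁, hq₁⟩ := h₁.exists_pos_mul_sq_norm_le
  obtain ⟨c₂, hc₂, hq₂⟩ := h₂.exists_pos_mul_sq_norm_le
  refine ⟨min c₁ c₂, lt_min hc₁ hc₂, fun P => ?_⟩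
  have hrow (G : Matrix (Fin 2) (Fin 2) ℂ) (x : Fin 2 → ℂ) :
      RCLike.re (star (star x) ⬝ᵥ G *ᵥ star x) = (x ⬝ᵥ G *ᵥ star x).re := by
    rw [star_star]; rfl
  have h0 := hq₁ (star (P 0))
  have h1 := hq₂ (star (P 1))
  rw [norm_star, hrow] at h0 h1
  unfold quadPart
  nlinarith [min_le_left c₁ c₂, min_le_right c₁ c₂, sq_nonneg ‖P 0‖, sq_nonneg ‖P 1‖]

theorem le_objective {c : ℝ} {P : Matrix (Fin 2) (Fin 2) ℂ} (hc : 0 < c)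
    (hq : c * (‖P 0‖ ^ 2 + ‖P 1‖ ^ 2) ≤ quadPart G₁ G₂ P) (hP : P.det ≠ 0) :
    c / 2 * (‖P 0‖ ^ 2 + ‖P 1‖ ^ 2) + (2 + 2 * Real.log (c / 4)) ≤ objective G₁ G₂ P := by
  set S := ‖P 0‖ ^ 2 + ‖P 1‖ ^ 2
  have hdet : ‖P.det‖ ≤ S :=
    (norm_det_fin_two_le P).trans (two_mul_le_add_sq ‖P 0‖ ‖P 1‖)
  have hdet_pos : 0 < ‖P.det‖ := norm_pos_iff.2 hP
  have hS : 0 < S := hdet_pos.trans_le hdet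
  have hlog_det : Real.log (‖P.det‖ ^ 2) ≤ 2 * Real.log S := by
    rw [Real.log_pow, Nat.cast_two]
    gcongr
  -- `log S ≤ (c/4) S - 1 - log (c/4)`, i.e. `log t ≤ t - 1` at `t = (c/4) S`.
  have hlog_S := Real.log_le_sub_one_of_pos (mul_pos (by positivity : 0 < c / 4) hS)
  rw [Real.log_mul (by positivity) hS.ne'] at hlog_S
  unfold objective
  linarith

theorem exists_isCompact_sublevel (h₁ : G₁.PosDef) (h₂ : G₂.PosDef) (M : ℝ) :
    ∃ K, IsCompact K ∧ K ⊆ {P | IsUnit P} ∧ ContinuousOn (objective G₁ G₂) K ∧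
      ∀ P, IsUnit P → objective G₁ G₂ P ≤ M → P ∈ K := by
  obtain ⟨c, hc, hq⟩ := exists_pos_mul_le_quadPart h₁ h₂
  set R := √((M - (2 + 2 * Real.log (c / 4))) / (c / 2))
  refine ⟨{P | Real.exp (-M) ≤ ‖P.det‖ ^ 2} ∩ Set.univ.pi fun _ => Metric.closedBall 0 R,
    ?_, ?_, ?_, ?_⟩
  · exact (isCompact_univ_pi fun _ => isCompact_closedBall 0 R).inter_left
      (isClosed_le continuous_const (by fun_prop))
  · rintro P ⟨hdet, -⟩
    rw [Set.mem_ofPred_eq, isUnit_iff_isUnit_det, isUnit_iff_ne_zero]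
    rintro h
    simp only [Set.mem_ofPred_eq, h, norm_zero] at hdet
    linarith [Real.exp_pos (-M)]
  · have hquad : Continuous (quadPart G₁ G₂) := by unfold quadPart; fun_prop
    refine hquad.continuousOn.sub (ContinuousOn.log (by fun_prop) fun P hP => ?_)
    exact ((Real.exp_pos _).trans_le hP.1).ne'
  · intro P hP hfP
    have hdet : P.det ≠ 0 := ((isUnit_iff_isUnit_det P).1 hP).ne_zero
    have hlow := le_objective hc (hq P) hdet
    refine ⟨?_, Set.mem_univ_pi.2 fun i => mem_closedBall_zero_iff.2 ?_⟩
    · have hquad : 0 ≤ quadPart G₁ G₂ P := (mul_nonneg hc.le (by positivity)).trans (hq P)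
      have hlog : -M ≤ Real.log (‖P.det‖ ^ 2) := by unfold objective at hfP; linarith
      calc Real.exp (-M) ≤ Real.exp (Real.log (‖P.det‖ ^ 2)) := Real.exp_le_exp.2 hlog
        _ = ‖P.det‖ ^ 2 := Real.exp_log (by positivity)
    · have hrow : ‖P i‖ ^ 2 ≤ ‖P 0‖ ^ 2 + ‖P 1‖ ^ 2 := by
        fin_cases i <;> simp
      refine Real.le_sqrt_of_sq_le ?_
      rw [le_div_iff₀ (by positivity)]
      nlinarith

end LogDetObjective

open LogDetObjective in
/-- For 2×2 Hermitian positive definite `G₁, G₂`, the function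
`f(P) = p₁* G₁ p₁ + p₂* G₂ p₂ − log |det P|²` (rows of `P` are `p₁*, p₂*`)
is bounded below on `GL(2, ℂ)` and its infimum there is attained. -/
theorem stmt11 (G₁ G₂ : Matrix (Fin 2) (Fin 2) ℂ) (h₁ : G₁.PosDef) (h₂ : G₂.PosDef) :
    let f : Matrix (Fin 2) (Fin 2) ℂ → ℝ := fun P =>
      (P 0 ⬝ᵥ G₁.mulVec (star (P 0))).re + (P 1 ⬝ᵥ G₂.mulVec (star (P 1))).re -
        Real.log (‖P.det‖ ^ 2)
    BddBelow (f '' {P | IsUnit P}) ∧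
      ∃ P₀ : Matrix (Fin 2) (Fin 2) ℂ, IsUnit P₀ ∧ ∀ P, IsUnit P → f P₀ ≤ f P := by
  intro f
  change BddBelow (objective G₁ G₂ '' _) ∧ ∃ P₀, IsUnit P₀ ∧ ∀ P, IsUnit P →
    objective G₁ G₂ P₀ ≤ objective G₁ G₂ P
  obtain ⟨K, hK, hKunit, hcont, hsub⟩ := exists_isCompact_sublevel h₁ h₂ (objective G₁ G₂ 1)
  obtain ⟨P₀, hP₀, hmin⟩ := exists_isMinOn_of_sublevel_subset_isCompact (s := {P | IsUnit P})
    isUnit_one hK hKunit hcont hsub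
  exact ⟨hmin.bddBelow, P₀, hP₀, fun P hP => hmin hP⟩
end

section
/- Let V₁, …, V_m ∈ ℂ^{m×m} be Hermitian positive definite. Then the surrogate function ℒ(W) = Σᵢ wᵢ* Vᵢ wᵢ − log |det W|², where W = [w₁, …, w_m]* ranges over GL(m, ℂ), is bounded below. -/
open Matrix
open scoped ComplexOrder

/-!
Each positive definite `Vᵢ` is coercive, `cᵢ ‖x‖² ≤ x* Vᵢ x` with `cᵢ > 0` (minimum of the
quadratic form on the compact unit sphere), and expanding the determinant over permutations gives
`|det W| ≤ m! ∏ᵢ ‖wᵢ‖`. Hence `ℒ(W) ≥ Σᵢ (cᵢ tᵢ − log tᵢ) − log (m!)²` with `tᵢ = ‖wᵢ‖² > 0`,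
and `c t − log t ≥ 1 + log c` bounds every summand below. Any norm on rows works; the one used
is the sup norm of `n → ℂ`.
-/

namespace Matrix

variable {n : Type*} [Fintype n]

theorem re_star_dotProduct_mulVec_smul (V : Matrix n n ℂ) (a : ℂ) (x : n → ℂ) :
    (star (a • x) ⬝ᵥ V *ᵥ (a • x)).re = ‖a‖ ^ 2 * (star x ⬝ᵥ V *ᵥ x).re := by
  rw [star_smul, mulVec_smul, dotProduct_smul, smul_dotProduct, smul_eq_mul, smul_eq_mul,
    ← mul_assoc, Complex.star_def, Complex.mul_conj, Complex.normSq_eq_norm_sq,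
    Complex.re_ofReal_mul]

theorem PosDef.exists_pos_mul_norm_sq_le {V : Matrix n n ℂ} (hV : V.PosDef) :
    ∃ c > 0, ∀ x : n → ℂ, c * ‖x‖ ^ 2 ≤ (star x ⬝ᵥ V *ᵥ x).re := by
  rcases subsingleton_or_nontrivial (n → ℂ) with _ | _
  · exact ⟨1, one_pos, fun x => by simp [Subsingleton.elim x 0]⟩
  set q : (n → ℂ) → ℝ := fun x => (star x ⬝ᵥ V *ᵥ x).re
  have hq : Continuous q := by fun_prop
  obtain ⟨x₀, hx₀, hmin⟩ := (isCompact_sphere (0 : n → ℂ) 1).exists_isMinOn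
    (NormedSpace.sphere_nonempty.mpr zero_le_one) hq.continuousOn
  have hpos : 0 < q x₀ := (Complex.lt_def.mp (hV.dotProduct_mulVec_pos
    (ne_zero_of_mem_unit_sphere ⟨x₀, hx₀⟩))).1
  refine ⟨q x₀, hpos, fun x => ?_⟩
  rcases eq_or_ne x 0 with rfl | hx
  · simp
  have hxn : (‖x‖ : ℂ) ≠ 0 := by exact_mod_cast norm_ne_zero_iff.mpr hx
  set u : n → ℂ := (‖x‖ : ℂ)⁻¹ • x
  have hu : u ∈ Metric.sphere (0 : n → ℂ) 1 := by
    simp [u, norm_smul, norm_ne_zero_iff.mpr hx]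
  have hxu : x = (‖x‖ : ℂ) • u := by simp [u, smul_smul, hxn]
  calc q x₀ * ‖x‖ ^ 2 ≤ q u * ‖x‖ ^ 2 := by gcongr; exact hmin hu
    _ = q x := by
      conv_rhs => rw [hxu]
      rw [show q ((‖x‖ : ℂ) • u) = _ from re_star_dotProduct_mulVec_smul V _ u,
        Complex.norm_real, norm_norm, mul_comm]

theorem norm_det_le_factorial_mul_prod_norm_row {R : Type*} [NormedCommRing R] [NormOneClass R]
    [DecidableEq n] (A : Matrix n n R) :
    ‖A.det‖ ≤ (Fintype.card n).factorial * ∏ i, ‖A i‖ := by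
  calc ‖A.det‖ = ‖∑ σ : Equiv.Perm n, (Equiv.Perm.sign σ : ℤ) * ∏ i, A (σ i) i‖ := by
        rw [det_apply']
    _ ≤ ∑ σ : Equiv.Perm n, ‖((Equiv.Perm.sign σ : ℤ) : R) * ∏ i, A (σ i) i‖ := norm_sum_le _ _
    _ ≤ ∑ σ : Equiv.Perm n, ∏ i, ‖A i‖ := by
      gcongr with σ
      calc ‖((Equiv.Perm.sign σ : ℤ) : R) * ∏ i, A (σ i) i‖
            ≤ ‖((Equiv.Perm.sign σ : ℤ) : R)‖ * ‖∏ i, A (σ i) i‖ := norm_mul_le _ _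
        _ ≤ 1 * ∏ i, ‖A (σ i) i‖ := by
          gcongr
          · rcases Int.units_eq_one_or (Equiv.Perm.sign σ) with h | h <;> simp [h]
          · exact Finset.norm_prod_le _ _
        _ = ∏ i, ‖A (σ i) i‖ := one_mul _
        _ ≤ ∏ i, ‖A (σ i)‖ := by gcongr with i; exact norm_le_pi_norm (A (σ i)) i
        _ = ∏ i, ‖A i‖ := Equiv.prod_comp σ (fun i => ‖A i‖)
    _ = (Fintype.card n).factorial * ∏ i, ‖A i‖ := by simp [Fintype.card_perm]

theorem row_ne_zero_of_det_ne_zero {R : Type*} [CommRing R] [DecidableEq n] {A : Matrix n n R}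
    (hA : A.det ≠ 0) (i : n) : A i ≠ 0 := fun h =>
  hA (det_eq_zero_of_row_eq_zero i (by simp [h]))

theorem log_norm_det_sq_le {R : Type*} [NormedCommRing R] [NormOneClass R] [DecidableEq n]
    {A : Matrix n n R} (hA : A.det ≠ 0) :
    Real.log (‖A.det‖ ^ 2) ≤
      Real.log (((Fintype.card n).factorial : ℝ) ^ 2) + ∑ i, Real.log (‖A i‖ ^ 2) := by
  have hrow (i : n) : ‖A i‖ ^ 2 ≠ 0 := by simpa using row_ne_zero_of_det_ne_zero hA i
  have hbound : ‖A.det‖ ^ 2 ≤ ((Fintype.card n).factorial * ∏ i, ‖A i‖) ^ 2 := by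
    gcongr; exact A.norm_det_le_factorial_mul_prod_norm_row
  rw [mul_pow, ← Finset.prod_pow] at hbound
  rw [← Real.log_prod fun i _ => hrow i, ← Real.log_mul (by positivity)
    (Finset.prod_ne_zero_iff.mpr fun i _ => hrow i)]
  exact Real.log_le_log (by positivity) hbound

end Matrix

theorem Real.one_add_log_le_mul_sub_log {c t : ℝ} (hc : 0 < c) (ht : 0 < t) :
    1 + Real.log c ≤ c * t - Real.log t := by
  have := Real.log_le_sub_one_of_pos (mul_pos hc ht)
  rw [Real.log_mul hc.ne' ht.ne'] at this
  linarith

/-- The IVA surrogate `ℒ(W) = Σᵢ wᵢ* Vᵢ wᵢ − log|det W|²` (rows of `W` are `wᵢ*`)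
with Hermitian positive definite `Vᵢ` is bounded below on `GL(m, ℂ)`. -/
theorem stmt12 (m : ℕ) (V : Fin m → Matrix (Fin m) (Fin m) ℂ)
    (hV : ∀ i, (V i).PosDef) :
    let L : Matrix (Fin m) (Fin m) ℂ → ℝ := fun W =>
      (∑ i, (W i ⬝ᵥ (V i).mulVec (star (W i))).re) -
        Real.log (‖W.det‖ ^ 2)
    ∃ c : ℝ, ∀ W : Matrix (Fin m) (Fin m) ℂ, IsUnit W → c ≤ L W := by
  intro L
  choose c hc hcV using fun i => (hV i).exists_pos_mul_norm_sq_le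
  refine ⟨∑ i, (1 + Real.log (c i)) - Real.log ((m.factorial : ℝ) ^ 2), fun W hW => ?_⟩
  have hdet : W.det ≠ 0 := ((isUnit_iff_isUnit_det W).mp hW).ne_zero
  have hquad (i : Fin m) : c i * ‖W i‖ ^ 2 ≤ (W i ⬝ᵥ V i *ᵥ star (W i)).re := by
    simpa using hcV i (star (W i))
  have hpointwise (i : Fin m) : 1 + Real.log (c i) ≤ c i * ‖W i‖ ^ 2 - Real.log (‖W i‖ ^ 2) :=
    Real.one_add_log_le_mul_sub_log (hc i)
      (pow_pos (norm_pos_iff.mpr (row_ne_zero_of_det_ne_zero hdet i)) 2)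
  have hlog := log_norm_det_sq_le hdet
  rw [Fintype.card_fin] at hlog
  calc ∑ i, (1 + Real.log (c i)) - Real.log ((m.factorial : ℝ) ^ 2)
      ≤ ∑ i, (c i * ‖W i‖ ^ 2 - Real.log (‖W i‖ ^ 2)) - Real.log ((m.factorial : ℝ) ^ 2) := by
        gcongr with i; exact hpointwise i
    _ = ∑ i, c i * ‖W i‖ ^ 2 -
          (Real.log ((m.factorial : ℝ) ^ 2) + ∑ i, Real.log (‖W i‖ ^ 2)) := by
        rw [Finset.sum_sub_distrib]; ring
    _ ≤ (∑ i, (W i ⬝ᵥ V i *ᵥ star (W i)).re) - Real.log (‖W.det‖ ^ 2) := by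
        gcongr with i; exact hquad i
end
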